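/- Let K̂_n (n ≥ 4) be the complete graph K_n with one edge subdivided. Then the difference index of K̂_n equals n − 1. -/

import Mathlib

open SimpleGraph

/-- `K̂ n`: the complete graph on `Fin n` with the edge between vertices `0` and `1`
subdivided by the new vertex `Sum.inr ()`. -/
def hatK (n : ℕ) : SimpleGraph (Fin n ⊕ Unit) :=
  SimpleGraph.fromRel (fun a b =>
    match a, b with
    | Sum.inl i, Sum.inl j => ¬(((i : ℕ) = 0 ∧ (j : ℕ) = 1) ∨ ((i : ℕ) = 1 ∧ (j : ℕ) = 0))
    | Sum.inl i, Sum.inr _ => (i : ℕ) = 0 ∨ (i : ℕ) = 1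
    | Sum.inr _, Sum.inl j => (j : ℕ) = 0 ∨ (j : ℕ) = 1
    | Sum.inr _, Sum.inr _ => False)

/-- The difference index of a finite simple graph. -/
noncomputable def diffIndex {V : Type*} [Fintype V] (G : SimpleGraph V) : ℕ :=
  sInf {n | ∃ f : V → ℤ, Function.Injective f ∧
    {s : ℤ | ∃ u v, G.Adj u v ∧ s = |f u - f v|}.ncard = n}

/-!
Lower bound: under an injective labelling the largest and the smallest label sit on two
different vertices, so one of them is an original vertex `x` of `K_n`, which has `n - 1`
neighbours. Since `f x` is extremal, the differences `|f x - f y|` along the edges at `x` are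
pairwise distinct, which already gives `n - 1` values.

Upper bound: label `K_n` by `0, …, n - 1` and the subdivision vertex, whose neighbours are `0`
and `1`, by `-1`. Every edge difference then lies in `{1, …, n - 1}`, so by the lower bound this
labelling has exactly `n - 1` differences.
-/

section DiffSet

variable {V : Type*}

def diffSet (G : SimpleGraph V) (f : V → ℤ) : Set ℤ :=
  {s | ∃ u v, G.Adj u v ∧ s = |f u - f v|}

theorem diffSet_finite [Finite V] (G : SimpleGraph V) (f : V → ℤ) : (diffSet G f).Finite :=
  (Set.finite_range fun p : V × V => |f p.1 - f p.2|).subset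
    fun _ ⟨u, v, _, hs⟩ => ⟨(u, v), hs.symm⟩

theorem diffSet_neg (G : SimpleGraph V) (f : V → ℤ) : diffSet G (-f) = diffSet G f := by
  simp only [diffSet, Pi.neg_apply, neg_sub_neg, abs_sub_comm]

theorem ncard_neighborSet_le_ncard_diffSet_of_isMax [Finite V] (G : SimpleGraph V)
    {f : V → ℤ} (hf : Function.Injective f) {x : V} (hx : ∀ y, f y ≤ f x) :
    (G.neighborSet x).ncard ≤ (diffSet G f).ncard := by
  refine Set.ncard_le_ncard_of_injOn (fun y => |f x - f y|)
    (fun y hy => ⟨x, y, hy, rfl⟩) (fun y _ z _ hyz => hf ?_) (diffSet_finite G f)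
  simp only [abs_of_nonneg (sub_nonneg.2 (hx y)), abs_of_nonneg (sub_nonneg.2 (hx z))] at hyz
  linarith

theorem ncard_neighborSet_le_ncard_diffSet [Finite V] (G : SimpleGraph V)
    {f : V → ℤ} (hf : Function.Injective f) {x : V}
    (hx : (∀ y, f y ≤ f x) ∨ ∀ y, f x ≤ f y) :
    (G.neighborSet x).ncard ≤ (diffSet G f).ncard := by
  rcases hx with hmax | hmin
  · exact ncard_neighborSet_le_ncard_diffSet_of_isMax G hf hmax
  · rw [← diffSet_neg]
    exact ncard_neighborSet_le_ncard_diffSet_of_isMax G (neg_injective.comp hf)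
      fun y => neg_le_neg (hmin y)

theorem diffIndex_eq_of_le_ncard_diffSet [Fintype V] (G : SimpleGraph V) (m : ℕ)
    (hle : ∀ f : V → ℤ, Function.Injective f → m ≤ (diffSet G f).ncard)
    (hex : ∃ f : V → ℤ, Function.Injective f ∧ (diffSet G f).ncard = m) :
    diffIndex G = m :=
  le_antisymm (Nat.sInf_le hex) (le_csInf ⟨m, hex⟩ fun _ ⟨f, hf, hk⟩ => hk ▸ hle f hf)

end DiffSet

namespace HatK

variable {n : ℕ}

theorem adj_inl_inl {i j : Fin n} : (hatK n).Adj (Sum.inl i) (Sum.inl j) ↔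
    i ≠ j ∧ ¬(((i : ℕ) = 0 ∧ (j : ℕ) = 1) ∨ ((i : ℕ) = 1 ∧ (j : ℕ) = 0)) := by
  simp only [hatK, fromRel_adj, ne_eq, Sum.inl.injEq]
  constructor
  · rintro ⟨hij, h | h⟩ <;> [exact ⟨hij, h⟩; exact ⟨hij, by tauto⟩]
  · exact fun ⟨hij, h⟩ => ⟨hij, Or.inl h⟩

theorem adj_inl_inr {i : Fin n} {u : Unit} :
    (hatK n).Adj (Sum.inl i) (Sum.inr u) ↔ (i : ℕ) = 0 ∨ (i : ℕ) = 1 := by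
  simp only [hatK, fromRel_adj, ne_eq, reduceCtorEq, not_false_eq_true, true_and, or_self]

theorem not_adj_inr_inr {u v : Unit} : ¬(hatK n).Adj (Sum.inr u) (Sum.inr v) := by
  simp [hatK]

/-- The neighbour of `inl i` standing in for `inl j`: the subdivision vertex if `{i, j} = {0, 1}`. -/
def neighbor (i j : Fin n) : Fin n ⊕ Unit :=
  if ((i : ℕ) = 0 ∧ (j : ℕ) = 1) ∨ ((i : ℕ) = 1 ∧ (j : ℕ) = 0) then Sum.inr () else Sum.inl j

theorem adj_neighbor {i j : Fin n} (hij : j ≠ i) : (hatK n).Adj (Sum.inl i) (neighbor i j) := by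
  unfold neighbor
  split_ifs with h
  · exact adj_inl_inr.2 (by omega)
  · exact adj_inl_inl.2 ⟨hij.symm, h⟩

theorem neighbor_injective (i : Fin n) : Function.Injective (neighbor i) := by
  intro j k hjk
  unfold neighbor at hjk
  split_ifs at hjk with hj hk hk
  · exact Fin.ext (by omega)
  · exact Sum.inl.inj hjk

theorem le_ncard_neighborSet_inl (i : Fin n) :
    n - 1 ≤ ((hatK n).neighborSet (Sum.inl i)).ncard := by
  have h : ({i}ᶜ : Set (Fin n)).ncard = n - 1 := by
    rw [Set.ncard_compl, Set.ncard_singleton, Nat.card_eq_fintype_card, Fintype.card_fin]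
  rw [← h]
  exact Set.ncard_le_ncard_of_injOn (neighbor i) (fun j hj => adj_neighbor hj)
    (neighbor_injective i).injOn

theorem exists_inl_extremal (hn : 0 < n) {f : Fin n ⊕ Unit → ℤ} (hf : Function.Injective f) :
    ∃ i, (∀ y, f y ≤ f (Sum.inl i)) ∨ ∀ y, f (Sum.inl i) ≤ f y := by
  obtain ⟨a, ha⟩ := Finite.exists_max f
  obtain ⟨b, hb⟩ := Finite.exists_min f
  match a, b with
  | Sum.inl i, _ => exact ⟨i, Or.inl ha⟩
  | _, Sum.inl i => exact ⟨i, Or.inr hb⟩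
  | Sum.inr (), Sum.inr () =>
    have h0 := hf (le_antisymm (ha (Sum.inl ⟨0, hn⟩)) (hb (Sum.inl ⟨0, hn⟩)))
    exact absurd h0 Sum.inl_ne_inr

theorem le_ncard_diffSet (hn : 0 < n) {f : Fin n ⊕ Unit → ℤ} (hf : Function.Injective f) :
    n - 1 ≤ (diffSet (hatK n) f).ncard := by
  obtain ⟨i, hi⟩ := exists_inl_extremal hn hf
  exact (le_ncard_neighborSet_inl i).trans (ncard_neighborSet_le_ncard_diffSet _ hf hi)

def standardLabelling (n : ℕ) : Fin n ⊕ Unit → ℤ :=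
  Sum.elim (fun i => (i : ℤ)) fun _ => -1

theorem standardLabelling_injective : Function.Injective (standardLabelling n) := by
  rintro (i | ⟨⟩) (j | ⟨⟩) h <;> simp only [standardLabelling, Sum.elim_inl, Sum.elim_inr] at h
  · exact congrArg Sum.inl (Fin.ext (by exact_mod_cast h))
  · omega
  · omega
  · rfl

theorem diffSet_standardLabelling_subset (hn : 3 ≤ n) :
    diffSet (hatK n) (standardLabelling n) ⊆ Set.Icc 1 ((n : ℤ) - 1) := by
  rintro _ ⟨u, v, huv, rfl⟩
  rw [Set.mem_Icc, abs_le]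
  refine ⟨Int.one_le_abs (sub_ne_zero.2 fun h => huv.ne (standardLabelling_injective h)), ?_⟩
  rcases u with i | ⟨⟩ <;> rcases v with j | ⟨⟩
  · have := i.isLt; have := j.isLt
    simp only [standardLabelling, Sum.elim_inl]
    omega
  · have := adj_inl_inr.1 huv
    simp only [standardLabelling, Sum.elim_inl, Sum.elim_inr]
    omega
  · have := adj_inl_inr.1 huv.symm
    simp only [standardLabelling, Sum.elim_inl, Sum.elim_inr]
    omega
  · exact absurd huv not_adj_inr_inr

theorem ncard_diffSet_standardLabelling (hn : 3 ≤ n) :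
    (diffSet (hatK n) (standardLabelling n)).ncard = n - 1 := by
  refine le_antisymm ?_ (le_ncard_diffSet (by omega) standardLabelling_injective)
  calc (diffSet (hatK n) (standardLabelling n)).ncard
      ≤ (Set.Icc 1 ((n : ℤ) - 1)).ncard :=
        Set.ncard_le_ncard (diffSet_standardLabelling_subset hn) (Set.finite_Icc _ _)
    _ = n - 1 := by
        rw [← Finset.coe_Icc, Set.ncard_coe_finset, Int.card_Icc]
        omega

end HatK

theorem stmt9 (n : ℕ) (hn : 4 ≤ n) : diffIndex (hatK n) = n - 1 :=
  diffIndex_eq_of_le_ncard_diffSet _ _ (fun _ hf => HatK.le_ncard_diffSet (by omega) hf)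
    ⟨_, HatK.standardLabelling_injective, HatK.ncard_diffSet_standardLabelling (by omega)⟩
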